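/- arXiv:2002.03208 — 6 statements merged into one kernel-verified Lean document; each statement's English description precedes it below -/
import Mathlib

section
/- Let G = ℤ² ⋊ ℤ be the semidirect product in which the generator t of ℤ acts on ℤ² by negation. Then for every integer pair (a,b), the commutator ⁅t,(a,b)⁆ equals (-2a,-2b) (viewed inside the ℤ² factor), and for every k ≥ 1 the k-th term of the lower central series of G (with γ₀ G = G) is exactly the subgroup 2ᵏℤ × 2ᵏℤ of the ℤ² factor. -/
/-!
Write elements of `G = ℤ² ⋊ ℤ` as pairs `(u, m)`, so that `t^m` acts on `ℤ²` by `(-1)^m`.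
Then `⁅(u, m), (v, n)⁆ = ((1 - (-1)^n) u + ((-1)^m - 1) v, 0)` with both coefficients even,
so `γ₁ G ⊆ 2ℤ²`; and for `u ∈ 2ᵏℤ²` the commutator `⁅u, g⁆` is `0` or `2u`, so
`⁅2ᵏℤ², G⁆ ⊆ 2ᵏ⁺¹ℤ²`. Conversely `⁅u, t⁆ = 2u` gives `2ᵏ⁺¹ℤ² ⊆ ⁅2ᵏℤ², G⁆`.
-/

open SemidirectProduct
open scoped commutatorElement

/-- The abelian group `ℤ²`, written multiplicatively. -/
abbrev Z2 : Type := Multiplicative (ℤ × ℤ)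

/-- The action of `ℤ` on `ℤ²` in which the generator acts by negation. -/
noncomputable def negAct : Multiplicative ℤ →* MulAut Z2 :=
  zpowersHom (MulAut Z2) (MulEquiv.inv Z2)

/-- The semidirect product `ℤ² ⋊ ℤ`, where the generator `t` of `ℤ` acts on `ℤ²`
by negation. -/
abbrev TB : Type := SemidirectProduct Z2 (Multiplicative ℤ) negAct

/-- The generator `t` of the `ℤ` factor. -/
noncomputable def tgen : TB := inr (Multiplicative.ofAdd (1 : ℤ))

open Multiplicative

lemma toAdd_negAct_apply (m : Multiplicative ℤ) (x : Z2) :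
    toAdd (negAct m x) = ((toAdd m).negOnePow : ℤ) • toAdd x := by
  change toAdd ((MulEquiv.inv Z2 ^ toAdd m) x) = _
  induction toAdd m using Int.induction_on with
  | zero => simp
  | succ n ih =>
    rw [zpow_add_one, MulAut.mul_apply, MulEquiv.inv_apply, map_inv, toAdd_inv, ih,
      Int.negOnePow_succ, Units.val_neg, neg_smul]
  | pred n ih =>
    rw [zpow_sub_one, MulAut.mul_apply, MulAut.inv_apply, MulEquiv.inv_symm, MulEquiv.inv_apply,
      map_inv, toAdd_inv, ih, Int.negOnePow_sub, Int.negOnePow_one]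
    simp

lemma even_one_sub_units (ε : ℤˣ) : Even (1 - (ε : ℤ)) := by
  rcases Int.units_eq_one_or ε with rfl | rfl <;> decide

lemma commutatorElement_mk (u v : ℤ × ℤ) (m n : ℤ) :
    ⁅(⟨ofAdd u, ofAdd m⟩ : TB), (⟨ofAdd v, ofAdd n⟩ : TB)⁆ =
      inl (ofAdd ((1 - n.negOnePow : ℤ) • u + ((m.negOnePow : ℤ) - 1) • v)) := by
  ext : 1
  · apply toAdd.injective
    simp only [commutatorElement_def, mul_left, mul_right, inv_left, inv_right, left_inl,
      toAdd_mul, toAdd_inv, toAdd_negAct_apply, toAdd_ofAdd, Int.negOnePow_add,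
      Int.negOnePow_neg, Units.val_mul]
    have hm := Int.isUnit_mul_self m.negOnePow.isUnit
    have hn := Int.isUnit_mul_self n.negOnePow.isUnit
    match_scalars
    · linear_combination (-(n.negOnePow : ℤ)) * hm
    · linear_combination (-(n.negOnePow : ℤ) ^ 2) * hm - hn
  · simp [commutatorElement_def]

lemma inl_ofAdd_eq_mk (u : ℤ × ℤ) : (inl : Z2 →* TB) (ofAdd u) = ⟨ofAdd u, ofAdd 0⟩ := rfl

lemma tgen_eq_mk : tgen = (⟨ofAdd 0, ofAdd 1⟩ : TB) := rfl

lemma commutatorElement_tgen_inl (u : ℤ × ℤ) :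
    ⁅tgen, (inl : Z2 →* TB) (ofAdd u)⁆ = inl (ofAdd (-2 • u)) := by
  rw [tgen_eq_mk, inl_ofAdd_eq_mk, commutatorElement_mk]
  congr 2
  simp [Int.negOnePow_one]

lemma commutatorElement_inl_tgen (u : ℤ × ℤ) :
    ⁅(inl : Z2 →* TB) (ofAdd u), tgen⁆ = inl (ofAdd ((2 : ℤ) • u)) := by
  rw [tgen_eq_mk, inl_ofAdd_eq_mk, commutatorElement_mk]
  congr 2
  simp [Int.negOnePow_one]

noncomputable def twoPowLattice (k : ℕ) : Subgroup TB :=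
  Subgroup.map (inl : Z2 →* TB) (AddSubgroup.toSubgroup
    ((AddSubgroup.zmultiples ((2 : ℤ) ^ k)).prod (AddSubgroup.zmultiples ((2 : ℤ) ^ k))))

lemma mem_twoPowLattice_iff {k : ℕ} {g : TB} :
    g ∈ twoPowLattice k ↔ ∃ w : ℤ × ℤ, (inl : Z2 →* TB) (ofAdd ((2 : ℤ) ^ k • w)) = g := by
  constructor
  · rintro ⟨x, ⟨⟨a, ha⟩, ⟨b, hb⟩⟩, rfl⟩
    refine ⟨(a, b), congrArg _ (Prod.ext ?_ ?_)⟩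
    · exact (mul_comm _ _).trans ha
    · exact (mul_comm _ _).trans hb
  · rintro ⟨w, rfl⟩
    exact ⟨_, ⟨⟨w.1, mul_comm _ _⟩, ⟨w.2, mul_comm _ _⟩⟩, rfl⟩

lemma commutator_twoPowLattice_top (k : ℕ) : ⁅twoPowLattice k, ⊤⁆ = twoPowLattice (k + 1) := by
  apply le_antisymm
  · rw [Subgroup.commutator_le]
    rintro _ hg ⟨v, n⟩ -
    obtain ⟨w, rfl⟩ := mem_twoPowLattice_iff.1 hg
    obtain ⟨c, hc⟩ := even_one_sub_units (toAdd n).negOnePow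
    rw [inl_ofAdd_eq_mk, ← ofAdd_toAdd v, ← ofAdd_toAdd n, commutatorElement_mk]
    refine mem_twoPowLattice_iff.2 ⟨c • w, ?_⟩
    congr 2
    rw [hc, Int.negOnePow_zero, Units.val_one, sub_self, zero_smul, add_zero]
    module
  · intro g hg
    obtain ⟨w, rfl⟩ := mem_twoPowLattice_iff.1 hg
    rw [pow_succ', mul_smul, ← commutatorElement_inl_tgen]
    exact Subgroup.commutator_mem_commutator (mem_twoPowLattice_iff.2 ⟨w, rfl⟩)
      (Subgroup.mem_top _)

lemma commutator_top_top_le : ⁅(⊤ : Subgroup TB), ⊤⁆ ≤ twoPowLattice 1 := by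
  rw [Subgroup.commutator_le]
  rintro ⟨u, m⟩ - ⟨v, n⟩ -
  obtain ⟨a, ha⟩ := even_one_sub_units (toAdd n).negOnePow
  obtain ⟨b, hb⟩ := even_one_sub_units (toAdd m).negOnePow
  rw [← ofAdd_toAdd u, ← ofAdd_toAdd v, ← ofAdd_toAdd m, ← ofAdd_toAdd n, commutatorElement_mk]
  refine mem_twoPowLattice_iff.2 ⟨a • toAdd u - b • toAdd v, ?_⟩
  congr 2
  rw [ha, show ((toAdd m).negOnePow : ℤ) - 1 = -(b + b) by linarith]
  module

lemma lowerCentralSeries_top_succ (k : ℕ) :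
    (⊤ : Subgroup TB).lowerCentralSeries (k + 1) = twoPowLattice (k + 1) := by
  induction k with
  | zero =>
    refine le_antisymm commutator_top_top_le ?_
    rw [← commutator_twoPowLattice_top 0]
    exact Subgroup.commutator_mono le_top le_rfl
  | succ k ih => rw [Subgroup.lowerCentralSeries_succ, ih, commutator_twoPowLattice_top]

/-- In `G = ℤ² ⋊ ℤ` (generator `t` of `ℤ` acting by negation), the commutator
`⁅t,(a,b)⁆` equals `(-2a,-2b)`, and for every `k ≥ 1` the `k`-th lower central
series term (with `γ₀ G = G`) is exactly the subgroup `2ᵏℤ × 2ᵏℤ` of the `ℤ²` factor. -/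
theorem commutator_and_lowerCentralSeries_of_torusBundleGroup :
    (∀ a b : ℤ,
      ⁅tgen, (inl (Multiplicative.ofAdd (a, b)) : TB)⁆ =
        inl (Multiplicative.ofAdd (-2 * a, -2 * b))) ∧
    (∀ k : ℕ, 1 ≤ k →
      (⊤ : Subgroup TB).lowerCentralSeries k =
        Subgroup.map (inl : Z2 →* TB)
          (AddSubgroup.toSubgroup
            ((AddSubgroup.zmultiples ((2 : ℤ) ^ k)).prod
              (AddSubgroup.zmultiples ((2 : ℤ) ^ k))))) := by
  refine ⟨fun a b => commutatorElement_tgen_inl (a, b), fun k hk => ?_⟩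
  obtain ⟨k, rfl⟩ := Nat.exists_eq_add_of_le' hk
  exact lowerCentralSeries_top_succ k
end

section
/- The semidirect product ℤ² ⋊ ℤ, where the generator of ℤ acts on ℤ² by negation, is residually nilpotent: the intersection of all terms of its lower central series is the trivial subgroup. -/
open SemidirectProduct

/-!
For `N ⋊ G` with `N`, `G` abelian and every element of `G` acting on `N` by `1` or by inversion,
the commutator of `(a, s)` and `(b, t)` is `(a / t•a) * (b / s•b)⁻¹`, and `a / t•a` is `1` or `a²`.
Hence `[G, G] ⊆ N²` and commutators with elements of `N^(2^n)` lie in `N^(2^(n+1))`, so the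
`n`-th term of the lower central series lies in `N^(2^n)`. In `ℤ²` only `0` is divisible by
every power of `2`.
-/

open scoped commutatorElement

namespace SemidirectProduct

variable {N G : Type*} [CommGroup N] [CommGroup G] {φ : G →* MulAut N}

theorem commutatorElement_eq_inl (x y : N ⋊[φ] G) :
    ⁅x, y⁆ = inl (x.left / φ y.right x.left * (y.left / φ x.right y.left)⁻¹) := by
  ext
  · simp only [commutatorElement_def, mul_left, inv_left, mul_right, inv_right, left_inl]
    rw [← MulAut.mul_apply, ← MulAut.mul_apply, ← map_mul, ← map_mul,
      mul_inv_cancel_comm, mul_inv_cancel, map_one, MulAut.one_apply, map_inv]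
    simp only [div_eq_mul_inv, mul_inv, inv_inv]
    ac_rfl
  · simp only [commutatorElement_def, mul_right, inv_right, right_inl]
    exact mul_inv_eq_one.mpr (by simp)

theorem div_apply_mem_range_powMonoidHom (hφ : ∀ g, φ g = 1 ∨ φ g = MulEquiv.inv N) {n : ℕ}
    {a : N} (ha : a ∈ (powMonoidHom (2 ^ n) : N →* N).range) (g : G) :
    a / φ g a ∈ (powMonoidHom (2 ^ (n + 1)) : N →* N).range := by
  obtain ⟨c, rfl⟩ := ha
  rcases hφ g with h | h <;> rw [h]
  · exact ⟨1, by simp⟩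
  · exact ⟨c, by simp [pow_succ, pow_mul]⟩

variable (φ) in
def twoPowSeries : ℕ → Subgroup (N ⋊[φ] G)
  | 0 => ⊤
  | n + 1 => (powMonoidHom (2 ^ (n + 1)) : N →* N).range.map inl

theorem isDescendingCentralSeries_twoPowSeries (hφ : ∀ g, φ g = 1 ∨ φ g = MulEquiv.inv N) :
    Subgroup.IsDescendingCentralSeries (twoPowSeries φ) := by
  refine ⟨rfl, ?_⟩
  rintro x (_ | n) hx y <;> rw [commutatorElement_eq_inl]
  · have hpow_one (a : N) : a ∈ (powMonoidHom (2 ^ 0) : N →* N).range := ⟨a, pow_one a⟩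
    exact Subgroup.mem_map_of_mem _ <|
      mul_mem (div_apply_mem_range_powMonoidHom hφ (hpow_one _) _)
        (inv_mem (div_apply_mem_range_powMonoidHom hφ (hpow_one _) _))
  · obtain ⟨a, ha, rfl⟩ := hx
    rw [left_inl, right_inl, map_one, MulAut.one_apply, div_self', inv_one, mul_one]
    exact Subgroup.mem_map_of_mem _ (div_apply_mem_range_powMonoidHom hφ ha _)

theorem iInf_lowerCentralSeries_eq_bot_of_act_inv (hφ : ∀ g, φ g = 1 ∨ φ g = MulEquiv.inv N)
    (hN : ⨅ n : ℕ, (powMonoidHom (2 ^ n) : N →* N).range = ⊥) :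
    ⨅ k : ℕ, (⊤ : Subgroup (N ⋊[φ] G)).lowerCentralSeries k = ⊥ := by
  refine eq_bot_iff.mpr fun x hx => ?_
  have hx_mem (n : ℕ) : x ∈ twoPowSeries φ (n + 1) :=
    Subgroup.descending_central_series_ge_lower _ (isDescendingCentralSeries_twoPowSeries hφ) _
      (Subgroup.mem_iInf.mp hx (n + 1))
  obtain ⟨a, -, rfl⟩ := hx_mem 0
  have ha : a ∈ ⨅ n : ℕ, (powMonoidHom (2 ^ n) : N →* N).range := by
    refine Subgroup.mem_iInf.mpr fun n => ?_
    cases n with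
    | zero => exact ⟨a, pow_one a⟩
    | succ n => exact (Subgroup.mem_map_iff_mem inl_injective).mp (hx_mem n)
  rw [hN, Subgroup.mem_bot] at ha
  rw [ha, map_one]
  exact one_mem _

end SemidirectProduct

theorem Int.eq_zero_of_forall_pow_dvd {p x : ℤ} (hp : p.natAbs ≠ 1) (h : ∀ n : ℕ, p ^ n ∣ x) :
    x = 0 := by
  by_contra hx
  exact FiniteMultiplicity.not_iff_forall.mpr h (Int.finiteMultiplicity_iff.mpr ⟨hp, hx⟩)

theorem negAct_eq_one_or_inv (s : Multiplicative ℤ) :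
    negAct s = 1 ∨ negAct s = MulEquiv.inv Z2 := by
  have hsq : MulEquiv.inv Z2 ^ (2 : ℤ) = 1 := MulEquiv.ext fun a => by simp [sq]
  rw [negAct, zpowersHom_apply, zpow_eq_zpow_emod _ hsq]
  rcases Int.emod_two_eq_zero_or_one (Multiplicative.toAdd s) with h | h <;> simp [h]

theorem Z2.iInf_range_powMonoidHom_two_pow :
    ⨅ n : ℕ, (powMonoidHom (2 ^ n) : Z2 →* Z2).range = ⊥ := by
  refine eq_bot_iff.mpr fun a ha => ?_
  have hdvd (n : ℕ) :
      2 ^ n ∣ (Multiplicative.toAdd a).1 ∧ 2 ^ n ∣ (Multiplicative.toAdd a).2 := by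
    obtain ⟨c, rfl⟩ := Subgroup.mem_iInf.mp ha n
    simp
  have hzero : Multiplicative.toAdd a = 0 :=
    Prod.ext (Int.eq_zero_of_forall_pow_dvd (by decide) fun n => (hdvd n).1)
      (Int.eq_zero_of_forall_pow_dvd (by decide) fun n => (hdvd n).2)
  exact Subgroup.mem_bot.mpr (toAdd_eq_zero.mp hzero)

/-- The group `ℤ² ⋊ ℤ` (generator of `ℤ` acting on `ℤ²` by negation) is residually
nilpotent: the intersection of its lower central series is trivial. -/
theorem torusBundleGroup_residuallyNilpotent :
    (⨅ k : ℕ, (⊤ : Subgroup TB).lowerCentralSeries k) = ⊥ :=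
  iInf_lowerCentralSeries_eq_bot_of_act_inv negAct_eq_one_or_inv
    Z2.iInf_range_powMonoidHom_two_pow
end

section
/- Let G be a group containing elements t and u with t·u·t⁻¹ = u⁻¹. Then for every natural number k, the element u^(2^k) lies in the k-th term γ_k G of the lower central series of G (where γ₀ G = G). -/
open scoped commutatorElement

section

variable {G : Type*} [Group G]

theorem commutatorElement_eq_sq_of_conj_eq_inv {x t : G} (h : t * x * t⁻¹ = x⁻¹) :
    ⁅x, t⁆ = x ^ 2 := by
  rw [commutatorElement_def, mul_assoc x, mul_assoc x, ← conj_inv, h, inv_inv, sq]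

namespace Subgroup

theorem sq_mem_lowerCentralSeries_succ {S : Subgroup G} {x t : G} {n : ℕ}
    (h : t * x * t⁻¹ = x⁻¹) (hx : x ∈ S.lowerCentralSeries n) (ht : t ∈ S) :
    x ^ 2 ∈ S.lowerCentralSeries (n + 1) :=
  commutatorElement_eq_sq_of_conj_eq_inv h ▸ commutator_mem_commutator hx ht

end Subgroup

end

/-- If `t u t⁻¹ = u⁻¹` in a group `G`, then `u ^ (2 ^ k)` lies in the `k`-th term of
the lower central series of `G` (with `γ₀ G = G`). -/
theorem pow_two_pow_mem_lowerCentralSeries {G : Type*} [Group G] (t u : G)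
    (h : t * u * t⁻¹ = u⁻¹) (k : ℕ) :
    u ^ (2 ^ k) ∈ (⊤ : Subgroup G).lowerCentralSeries k := by
  induction k with
  | zero => exact Subgroup.mem_top _
  | succ k ih =>
    have hconj : t * u ^ 2 ^ k * t⁻¹ = (u ^ 2 ^ k)⁻¹ := by rw [← conj_pow, h, inv_pow]
    rw [pow_succ, pow_mul]
    exact Subgroup.sq_mem_lowerCentralSeries_succ hconj ih (Subgroup.mem_top t)
end

section
/- If f : G → H is a group homomorphism that induces a surjection on abelianizations, then for every natural number k the composition G → H → H/γ_k H is surjective; equivalently, the range of f together with γ_k H generates H. -/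
/-!
Let `K = f.range`. Surjectivity on abelianizations says `K ⊔ [H, H] = H`. If `K ⊔ γ_k H = H`,
then modulo `γ_{k+1} H` the subgroup `γ_k H` becomes central, and a subgroup that generates a
group together with a central subgroup contains the commutator subgroup. Hence
`[H, H] ≤ K ⊔ γ_{k+1} H`, so `K ⊔ γ_{k+1} H ⊇ K ⊔ [H, H] = H`.
-/

namespace Subgroup

variable {G : Type*} [Group G]

theorem commutator_le_of_sup_eq_top_of_le_center {K Z : Subgroup G} (hZ : Z ≤ center G)
    (h : K ⊔ Z = ⊤) : _root_.commutator G ≤ K := by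
  have : K.Normal := normalizer_eq_top_iff.mp <| top_le_iff.mp <|
    h.ge.trans (sup_le le_normalizer (hZ.trans (center_le_normalizer _)))
  have : IsMulCommutative Z :=
    ⟨⟨fun a b => Subtype.ext (mem_center_iff.mp (hZ a.2) b).symm⟩⟩
  exact Normal.commutator_le_of_self_sup_commutative_eq_top h this

theorem commutator_le_sup_of_sup_eq_top {K N M : Subgroup G} [M.Normal]
    (hNM : ⁅N, ⊤⁆ ≤ M) (h : K ⊔ N = ⊤) : _root_.commutator G ≤ K ⊔ M := by
  set π := QuotientGroup.mk' M
  have hπ : Function.Surjective π := QuotientGroup.mk'_surjective M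
  have hcenter : N.map π ≤ center (G ⧸ M) := by
    rw [← commutator_top_right_eq_bot_iff_le_center, ← map_top_of_surjective π hπ,
      ← map_commutator, map_eq_bot_iff, QuotientGroup.ker_mk']
    exact hNM
  have hsup : K.map π ⊔ N.map π = ⊤ := by
    rw [← map_sup, h, map_top_of_surjective π hπ]
  rw [← QuotientGroup.ker_mk' M, ← comap_map_eq, ← map_le_iff_le_comap, _root_.commutator_def,
    map_commutator, map_top_of_surjective π hπ, ← _root_.commutator_def]
  exact commutator_le_of_sup_eq_top_of_le_center hcenter hsup

theorem sup_lowerCentralSeries_eq_top {K : Subgroup G} (h : K ⊔ _root_.commutator G = ⊤)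
    (n : ℕ) :
    K ⊔ (⊤ : Subgroup G).lowerCentralSeries n = ⊤ := by
  induction n with
  | zero => exact sup_top_eq K
  | succ n ih =>
    refine top_le_iff.mp (h.ge.trans (sup_le le_sup_left ?_))
    exact commutator_le_sup_of_sup_eq_top (lowerCentralSeries_succ _ n).ge ih

end Subgroup

namespace MonoidHom

variable {G H : Type*} [Group G] [Group H]

theorem range_sup_commutator_eq_top_of_surjective_abelianizationMap {f : G →* H}
    (hf : Function.Surjective (Abelianization.map f)) : f.range ⊔ commutator H = ⊤ := by
  have hmap : f.range.map Abelianization.of = ⊤ := by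
    rw [← range_comp, range_eq_top]
    exact hf.comp QuotientGroup.mk_surjective
  rw [← Abelianization.ker_of, ← Subgroup.comap_map_eq, hmap, Subgroup.comap_top]

theorem surjective_mk'_comp_of_range_sup_eq_top (f : G →* H) {N : Subgroup H} [N.Normal]
    (h : f.range ⊔ N = ⊤) : Function.Surjective ((QuotientGroup.mk' N).comp f) := by
  rw [← range_eq_top, range_comp]
  apply Subgroup.comap_injective (QuotientGroup.mk'_surjective N)
  rw [Subgroup.comap_map_eq, QuotientGroup.ker_mk', h, Subgroup.comap_top]

end MonoidHom

/-- If `f : G → H` induces a surjection on abelianizations, then for every `k` the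
composition `G → H → H/γ_k H` is surjective; equivalently, the range of `f` together
with `γ_k H` generates `H`. -/
theorem surjective_onto_nilpotent_quotients_of_abelianization_surjective
    {G H : Type*} [Group G] [Group H] (f : G →* H)
    (hf : Function.Surjective (Abelianization.map f)) (k : ℕ) :
    Function.Surjective
      (fun g : G => ((f g : H) : H ⧸ (⊤ : Subgroup H).lowerCentralSeries k)) ∧
    f.range ⊔ (⊤ : Subgroup H).lowerCentralSeries k = ⊤ := by
  have hsup := Subgroup.sup_lowerCentralSeries_eq_top
    (f.range_sup_commutator_eq_top_of_surjective_abelianizationMap hf) k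
  exact ⟨f.surjective_mk'_comp_of_range_sup_eq_top hsup, hsup⟩
end

section
/- Let p be a Laurent polynomial with integer coefficients that is symmetric under t ↦ t⁻¹, i.e., p(t) = p(t⁻¹). Then 4 divides p(−1) − p(1). In particular, if p(1) = ±1 then p(−1) ≡ ±1 (mod 4), and p(−1) is odd. -/
/-!
With `c n` the coefficients of `p`, `p(-1) - p(1) = -2 * ∑_{n odd} c n`. Symmetry gives
`c (-n) = c n`, and `n ↦ -n` pairs each odd `n` with the distinct odd `-n`, so the sum over
odd `n` is even.
-/

/-- Evaluation of an integral Laurent polynomial at a unit `u ∈ {±1}` of `ℤ`. -/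
noncomputable def laurentEval (u : ℤˣ) : LaurentPolynomial ℤ →ₐ[ℤ] ℤ :=
  AddMonoidAlgebra.lift ℤ ℤ ℤ ((Units.coeHom ℤ).comp (zpowersHom ℤˣ u))

open LaurentPolynomial

theorem Finset.even_sum_of_involution {α : Type*} {s : Finset α} {f : α → ℤ} (σ : α → α)
    (hσ_mem : ∀ a ∈ s, σ a ∈ s) (hσ_invol : ∀ a ∈ s, σ (σ a) = a)
    (hσ_ne : ∀ a ∈ s, σ a ≠ a) (hf : ∀ a ∈ s, f (σ a) = f a) :
    Even (∑ a ∈ s, f a) := by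
  rw [← ZMod.intCast_eq_zero_iff_even, Int.cast_sum]
  refine Finset.sum_involution (fun a _ => σ a) (fun a ha => ?_) (fun a ha _ => hσ_ne a ha)
    hσ_mem hσ_invol
  rw [hf a ha, CharTwo.add_self_eq_zero]

theorem laurentEval_apply (u : ℤˣ) (p : LaurentPolynomial ℤ) :
    laurentEval u p = ∑ n ∈ p.coeff.support, p.coeff n * ((u ^ n : ℤˣ) : ℤ) := by
  simp [laurentEval, AddMonoidAlgebra.lift_apply, Finsupp.sum]

theorem laurentEval_neg_one_sub_laurentEval_one (p : LaurentPolynomial ℤ) :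
    laurentEval (-1) p - laurentEval 1 p =
      -2 * ∑ n ∈ p.coeff.support with Odd n, p.coeff n := by
  rw [laurentEval_apply, laurentEval_apply, ← Finset.sum_sub_distrib, Finset.sum_filter,
    Finset.mul_sum]
  refine Finset.sum_congr rfl fun n _ => ?_
  rcases Int.even_or_odd n with hn | hn
  · simp [hn.neg_one_zpow, Int.not_odd_iff_even.mpr hn]
  · simp only [hn.neg_one_zpow, hn, if_true, Units.val_neg, Units.val_one, one_zpow]
    ring

theorem even_sum_odd_coeff_of_invert_eq {p : LaurentPolynomial ℤ} (hsym : invert p = p) :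
    Even (∑ n ∈ p.coeff.support with Odd n, p.coeff n) := by
  have hcoeff (n : ℤ) : p.coeff (-n) = p.coeff n := by rw [← invert_apply, hsym]
  refine Finset.even_sum_of_involution Neg.neg (fun n hn => ?_) (fun n _ => neg_neg n)
    (fun n hn => ?_) (fun n _ => hcoeff n)
  · simpa [hcoeff] using hn
  · have hodd := Int.odd_iff.mp (Finset.mem_filter.mp hn).2
    omega

theorem four_dvd_laurentEval_neg_one_sub_laurentEval_one {p : LaurentPolynomial ℤ}
    (hsym : invert p = p) : (4 : ℤ) ∣ laurentEval (-1) p - laurentEval 1 p := by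
  obtain ⟨k, hk⟩ := even_sum_odd_coeff_of_invert_eq hsym
  rw [laurentEval_neg_one_sub_laurentEval_one, hk]
  exact ⟨-k, by ring⟩

/-- If `p ∈ ℤ[t,t⁻¹]` is symmetric under `t ↦ t⁻¹`, then `4 ∣ p(-1) - p(1)`; in
particular, if `p(1) = ±1`, then `p(-1) ≡ p(1) (mod 4)` and `p(-1)` is odd. -/
theorem symmetric_laurent_eval_neg_one (p : LaurentPolynomial ℤ)
    (hsym : LaurentPolynomial.invert p = p) :
    (4 : ℤ) ∣ laurentEval (-1) p - laurentEval 1 p ∧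
    ((laurentEval 1 p = 1 ∨ laurentEval 1 p = -1) →
      laurentEval (-1) p ≡ laurentEval 1 p [ZMOD 4] ∧ Odd (laurentEval (-1) p)) := by
  have hdvd := four_dvd_laurentEval_neg_one_sub_laurentEval_one hsym
  refine ⟨hdvd, fun hunit => ⟨(Int.modEq_iff_dvd.mpr hdvd).symm, ?_⟩⟩
  obtain ⟨k, hk⟩ := hdvd
  rcases hunit with h | h
  · exact ⟨2 * k, by omega⟩
  · exact ⟨2 * k - 1, by omega⟩
end

section
/- Let d be an odd integer and let M = ℤ² be the module over the Laurent polynomial ring ℤ[t, t⁻¹] on which t acts by the matrix h = [[-1, d], [0, -1]]. Let I be the augmentation ideal (the ideal generated by t − 1). Then for every k, I^(2k)·M ⊆ 4^k·M; consequently ⋂_k I^k·M = 0. -/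
/-- The monodromy matrix `h = [[-1,d],[0,-1]]`, as a unit of `M₂(ℤ)`
(its inverse is `[[-1,-d],[0,-1]]`). -/
noncomputable def hUnit (d : ℤ) : (Matrix (Fin 2) (Fin 2) ℤ)ˣ where
  val := !![-1, d; 0, -1]
  inv := !![-1, -d; 0, -1]
  val_inv := by
    ext i j
    fin_cases i <;> fin_cases j <;>
      simp [Matrix.mul_apply, Fin.sum_univ_succ, Matrix.one_apply]
  inv_val := by
    ext i j
    fin_cases i <;> fin_cases j <;>
      simp [Matrix.mul_apply, Fin.sum_univ_succ, Matrix.one_apply]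

/-- The `ℤ[t,t⁻¹]`-module structure on `ℤ²` in which `t` acts by `h`, packaged as the
ring homomorphism `ℤ[t,t⁻¹] → M₂(ℤ)` sending `t` to `h`. -/
noncomputable def laurentToMatrix (d : ℤ) :
    LaurentPolynomial ℤ →ₐ[ℤ] Matrix (Fin 2) (Fin 2) ℤ :=
  AddMonoidAlgebra.lift ℤ _ ℤ
    ((Units.coeHom (Matrix (Fin 2) (Fin 2) ℤ)).comp
      (zpowersHom (Matrix (Fin 2) (Fin 2) ℤ)ˣ (hUnit d)))

/-- The augmentation map `ℤ[t,t⁻¹] → ℤ`, `t ↦ 1`; its kernel is the augmentation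
ideal `I` (the ideal generated by `t - 1`). -/
noncomputable def laurentAug : LaurentPolynomial ℤ →ₐ[ℤ] ℤ :=
  AddMonoidAlgebra.lift ℤ ℤ ℤ ((Units.coeHom ℤ).comp (zpowersHom ℤˣ 1))

/-! The augmentation ideal is generated by `t - 1`, which acts by `h - 1`, and
`(h - 1)² = -4h`. Hence every element of `I^(2k)` acts by `4^k` times an integer matrix,
so an element of `⋂ₖ I^k·M` has coordinates divisible by every power of `4`, hence zero. -/

theorem Int.eq_zero_of_forall_pow_dvd_s19 {c a : ℤ} (hc : 2 ≤ c) (h : ∀ j : ℕ, c ^ j ∣ a) :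
    a = 0 := by
  refine Int.eq_zero_of_abs_lt_dvd (h a.natAbs) ?_
  calc |a| = a.natAbs := Int.abs_eq_natAbs a
    _ < 2 ^ a.natAbs := by exact_mod_cast Nat.lt_two_pow_self
    _ ≤ c ^ a.natAbs := pow_le_pow_left₀ (by norm_num) hc _

namespace LaurentPolynomial

variable {R : Type*} [CommRing R]

theorem T_one_sub_one_dvd_T_sub_one (n : ℤ) : (T 1 - 1 : R[T;T⁻¹]) ∣ T n - 1 := by
  have dvd_of_nat (k : ℕ) : (T 1 - 1 : R[T;T⁻¹]) ∣ T k - 1 := by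
    simpa [T_pow] using sub_one_dvd_pow_sub_one (T 1 : R[T;T⁻¹]) k
  obtain ⟨k, rfl | rfl⟩ := Int.eq_nat_or_neg n
  · exact dvd_of_nat k
  · have : (T (-k) - 1 : R[T;T⁻¹]) = -T (-k) * (T k - 1) := by
      rw [neg_mul, mul_sub, ← T_add, neg_add_cancel, T_zero]; ring
    exact this ▸ (dvd_of_nat k).mul_left _

end LaurentPolynomial

open LaurentPolynomial

theorem laurentAug_C_mul_T (a n : ℤ) : laurentAug (C a * T n) = a := by
  rw [← single_eq_C_mul_T, laurentAug, AddMonoidAlgebra.lift_single]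
  simp

theorem sub_C_laurentAug_mem_span (q : ℤ[T;T⁻¹]) :
    q - C (laurentAug q) ∈ Ideal.span {(T 1 - 1 : ℤ[T;T⁻¹])} := by
  induction q using LaurentPolynomial.induction_on' with
  | add f g hf hg =>
    rw [map_add, map_add, add_sub_add_comm]
    exact Ideal.add_mem _ hf hg
  | C_mul_T n a =>
    rw [laurentAug_C_mul_T, ← mul_sub_one]
    exact Ideal.mem_span_singleton.mpr ((T_one_sub_one_dvd_T_sub_one n).mul_left _)

theorem ker_laurentAug_le_span :
    RingHom.ker laurentAug.toRingHom ≤ Ideal.span {(T 1 - 1 : ℤ[T;T⁻¹])} := by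
  intro p hp
  simpa [(RingHom.mem_ker.mp hp : laurentAug p = 0)] using sub_C_laurentAug_mem_span p

theorem laurentToMatrix_T_one (d : ℤ) : laurentToMatrix d (T 1) = hUnit d := by
  rw [laurentToMatrix, T, AddMonoidAlgebra.lift_single]
  simp

theorem hUnit_sub_one_sq (d : ℤ) :
    ((hUnit d : Matrix (Fin 2) (Fin 2) ℤ) - 1) ^ 2 =
      (-4 : ℤ) • (hUnit d : Matrix (Fin 2) (Fin 2) ℤ) := by
  ext i j
  fin_cases i <;> fin_cases j <;>
    simp [hUnit, sq, Matrix.mul_apply, Fin.sum_univ_succ, Matrix.one_apply]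
  ring

theorem exists_laurentToMatrix_eq_four_pow_smul (d : ℤ) {k : ℕ} {p : ℤ[T;T⁻¹]}
    (hp : p ∈ RingHom.ker laurentAug.toRingHom ^ (2 * k)) :
    ∃ A : Matrix (Fin 2) (Fin 2) ℤ, laurentToMatrix d p = (4 : ℤ) ^ k • A := by
  have hp' : p ∈ Ideal.span {(T 1 - 1 : ℤ[T;T⁻¹]) ^ (2 * k)} := by
    rw [← Ideal.span_singleton_pow]
    exact Ideal.pow_right_mono ker_laurentAug_le_span _ hp
  obtain ⟨q, rfl⟩ := Ideal.mem_span_singleton.mp hp'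
  refine ⟨(-1 : ℤ) ^ k • ((hUnit d : Matrix (Fin 2) (Fin 2) ℤ) ^ k * laurentToMatrix d q),
    ?_⟩
  rw [map_mul, map_pow, map_sub, map_one, laurentToMatrix_T_one, pow_mul, hUnit_sub_one_sq,
    smul_pow, smul_smul, ← mul_pow, smul_mul_assoc]
  norm_num

theorem closure_mulVec_ker_pow_le_range_four_pow_smul (d : ℤ) (k : ℕ) :
    AddSubgroup.closure
      {v : Fin 2 → ℤ | ∃ p ∈ (RingHom.ker laurentAug.toRingHom) ^ (2 * k),
        ∃ w : Fin 2 → ℤ, v = (laurentToMatrix d p).mulVec w} ≤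
      (DistribSMul.toAddMonoidHom (Fin 2 → ℤ) ((4 : ℤ) ^ k)).range := by
  rw [AddSubgroup.closure_le]
  rintro _ ⟨p, hp, w, rfl⟩
  obtain ⟨A, hA⟩ := exists_laurentToMatrix_eq_four_pow_smul d hp
  exact ⟨A.mulVec w, by rw [hA, Matrix.smul_mulVec]; rfl⟩

theorem augmentation_ideal_powers_shrink_general (d : ℤ) :
    (∀ k : ℕ, ∀ p ∈ (RingHom.ker laurentAug.toRingHom) ^ (2 * k),
      ∀ m : Fin 2 → ℤ, ∃ m' : Fin 2 → ℤ,
        (laurentToMatrix d p).mulVec m = ((4 : ℤ) ^ k) • m') ∧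
    (∀ m : Fin 2 → ℤ,
      (∀ k : ℕ, m ∈ AddSubgroup.closure
        {v : Fin 2 → ℤ | ∃ p ∈ (RingHom.ker laurentAug.toRingHom) ^ k,
          ∃ w : Fin 2 → ℤ, v = (laurentToMatrix d p).mulVec w}) → m = 0) := by
  refine ⟨fun k p hp m => ?_, fun m hm => funext fun i => ?_⟩
  · obtain ⟨A, hA⟩ := exists_laurentToMatrix_eq_four_pow_smul d hp
    exact ⟨A.mulVec m, by rw [hA, Matrix.smul_mulVec]⟩
  · refine Int.eq_zero_of_forall_pow_dvd_s19 (c := 4) (by norm_num) fun k => ?_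
    obtain ⟨y, hy⟩ := closure_mulVec_ker_pow_le_range_four_pow_smul d k (hm (2 * k))
    exact ⟨y i, by simp [← hy]⟩

/-- For `d` odd and `M = ℤ²` the `ℤ[t,t⁻¹]`-module on which `t` acts by
`h = [[-1,d],[0,-1]]`: every element of `I^(2k)·M` lies in `4^k·M`, and consequently
`⋂_k I^k·M = 0`. -/
theorem augmentation_ideal_powers_shrink (d : ℤ) (hd : Odd d) :
    (∀ k : ℕ, ∀ p ∈ (RingHom.ker laurentAug.toRingHom) ^ (2 * k),
      ∀ m : Fin 2 → ℤ, ∃ m' : Fin 2 → ℤ,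
        (laurentToMatrix d p).mulVec m = ((4 : ℤ) ^ k) • m') ∧
    (∀ m : Fin 2 → ℤ,
      (∀ k : ℕ, m ∈ AddSubgroup.closure
        {v : Fin 2 → ℤ | ∃ p ∈ (RingHom.ker laurentAug.toRingHom) ^ k,
          ∃ w : Fin 2 → ℤ, v = (laurentToMatrix d p).mulVec w}) → m = 0) :=
  augmentation_ideal_powers_shrink_general d
end
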